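/- Consider the family of quartic curves with a tacnode C_{a,b} : y²(x − a)² − byx² + x⁴ = 0, indexed by real parameters a ∈ ℝ and b > 0, with projective closures x₁²(x₀ − a x₂)² − b x₁ x₀² x₂ + x₀⁴ = 0 in ℙ²(ℂ). Then for every (x₀,x₁,x₂) ∈ ℂ³ \ {(0,0,0)}, one has x₁²(x₀ − a x₂)² − b x₁ x₀² x₂ + x₀⁴ = 0 for all a ∈ ℝ and all b > 0 if and only if the point [x₀:x₁:x₂] is one of [0:0:1], [0:1:0], [i:1:0], [−i:1:0]. Consequently #B(ℂ) = 4 and ν_opt = d² − #B(ℂ) + 1 = 16 − 4 + 1 = 13. -/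

import Mathlib

/-!
Writing the quartic as a polynomial in the parameters,
`(x₁x₂)² a² − 2x₀x₁²x₂ a − x₀²x₁x₂ b + x₀²(x₁² + x₀²)`, it vanishes for all `a ∈ ℝ`, `b > 0` exactly
when `x₁x₂ = 0` and `x₀²(x₁² + x₀²) = 0`. These two equations cut out the point `[0:0:1]` (if
`x₁ = 0`) and, on the line `x₂ = 0`, the double point `[0:1:0]` and the points `x₀ = ±i x₁`.
-/

noncomputable section

/-- The base locus in `ℙ²(ℂ)` of the family of projective quartics with a tacnode
`x₁²(x₀ − a x₂)² − b x₁ x₀² x₂ + x₀⁴ = 0`, `a ∈ ℝ`, `b > 0`. -/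
def tacnodeQuarticBaseLocus : Set (Projectivization ℂ (Fin 3 → ℂ)) :=
  {P | ∀ a b : ℝ, 0 < b →
    (P.rep 1) ^ 2 * (P.rep 0 - (a : ℂ) * P.rep 2) ^ 2
      - (b : ℂ) * P.rep 1 * (P.rep 0) ^ 2 * P.rep 2 + (P.rep 0) ^ 4 = 0}

open Complex Projectivization
open scoped LinearAlgebra.Projectivization

theorem tacnodeQuartic_forall_eq_zero_iff (x y z : ℂ) :
    (∀ a b : ℝ, 0 < b → y ^ 2 * (x - a * z) ^ 2 - b * y * x ^ 2 * z + x ^ 4 = 0) ↔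
      y * z = 0 ∧ x ^ 2 * (y ^ 2 + x ^ 2) = 0 := by
  constructor
  · intro h
    have h01 := h 0 1 one_pos
    have h02 := h 0 2 two_pos
    have h11 := h 1 1 one_pos
    have hm11 := h (-1) 1 one_pos
    push_cast at h01 h02 h11 hm11
    refine ⟨pow_eq_zero_iff two_ne_zero |>.mp ?_, ?_⟩
    · linear_combination (h11 + hm11 - 2 * h01) / 2
    · linear_combination 2 * h01 - h02
  · rintro ⟨hyz, hx⟩ a b -
    linear_combination (a ^ 2 * y * z - 2 * a * x * y - b * x ^ 2) * hyz + hx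

theorem sq_add_sq_eq_zero_iff (x y : ℂ) :
    y ^ 2 + x ^ 2 = 0 ↔ x - y * I = 0 ∨ x + y * I = 0 := by
  rw [← mul_eq_zero]
  constructor <;> intro h
  · linear_combination h - y ^ 2 * I_sq
  · linear_combination h + y ^ 2 * I_sq

theorem tacnodeEquations_iff_crossProduct_eq_zero (v : Fin 3 → ℂ) :
    v 1 * v 2 = 0 ∧ v 0 ^ 2 * (v 1 ^ 2 + v 0 ^ 2) = 0 ↔
      crossProduct v ![0, 0, 1] = 0 ∨ crossProduct v ![0, 1, 0] = 0 ∨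
        crossProduct v ![I, 1, 0] = 0 ∨ crossProduct v ![-I, 1, 0] = 0 := by
  simp only [Fin.isValue, mul_eq_zero, ne_eq, OfNat.ofNat_ne_zero, not_false_eq_true,
    pow_eq_zero_iff, sq_add_sq_eq_zero_iff, cross_apply, Nat.succ_eq_add_one, Nat.reduceAdd,
    Matrix.cons_val, mul_one, Matrix.cons_val_one, Matrix.cons_val_zero, mul_zero, sub_zero,
    zero_sub, sub_self, funext_iff, Pi.zero_apply, Fin.forall_fin_succ, Matrix.cons_val_succ,
    neg_eq_zero, Matrix.cons_val_fin_one, implies_true, and_true, forall_const, true_and,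
    I_ne_zero, or_false, and_self_left, mul_neg, sub_neg_eq_add]
  grind

def basePt001 : ℙ ℂ (Fin 3 → ℂ) := mk ℂ ![0, 0, 1] (by simp)

def basePt010 : ℙ ℂ (Fin 3 → ℂ) := mk ℂ ![0, 1, 0] (by simp)

def basePtI10 : ℙ ℂ (Fin 3 → ℂ) := mk ℂ ![I, 1, 0] (by simp)

def basePtNegI10 : ℙ ℂ (Fin 3 → ℂ) := mk ℂ ![-I, 1, 0] (by simp)

theorem tacnodeQuartic_forall_eq_zero_iff_mk_eq (v : Fin 3 → ℂ) (hv : v ≠ 0) :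
    (∀ a b : ℝ, 0 < b →
        v 1 ^ 2 * (v 0 - a * v 2) ^ 2 - b * v 1 * v 0 ^ 2 * v 2 + v 0 ^ 4 = 0) ↔
      mk ℂ v hv = basePt001 ∨ mk ℂ v hv = basePt010 ∨
        mk ℂ v hv = basePtI10 ∨ mk ℂ v hv = basePtNegI10 := by
  simp only [tacnodeQuartic_forall_eq_zero_iff, tacnodeEquations_iff_crossProduct_eq_zero,
    basePt001, basePt010, basePtI10, basePtNegI10, mk_eq_mk_iff_crossProduct_eq_zero]

theorem tacnodeQuarticBaseLocus_eq :
    tacnodeQuarticBaseLocus = {basePt001, basePt010, basePtI10, basePtNegI10} := by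
  ext P
  simpa [tacnodeQuarticBaseLocus] using
    tacnodeQuartic_forall_eq_zero_iff_mk_eq P.rep P.rep_nonzero

theorem ncard_basePts :
    ({basePt001, basePt010, basePtI10, basePtNegI10} : Set (ℙ ℂ (Fin 3 → ℂ))).ncard = 4 := by
  rw [Set.ncard_insert_of_notMem, Set.ncard_insert_of_notMem, Set.ncard_pair] <;>
    simp [basePt001, basePt010, basePtI10, basePtNegI10, mk_eq_mk_iff_crossProduct_eq_zero,
      cross_apply, funext_iff, Fin.exists_fin_succ, ← two_mul]

/-- quartic with a tacnode. A nonzero `(x₀,x₁,x₂) ∈ ℂ³` satisfies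
`x₁²(x₀ − a x₂)² − b x₁ x₀² x₂ + x₀⁴ = 0` for all `a ∈ ℝ` and all `b > 0` iff the point
`[x₀:x₁:x₂]` is one of `[0:0:1]`, `[0:1:0]`, `[i:1:0]`, `[−i:1:0]`; consequently
`#B(ℂ) = 4` and `ν_opt = 4² − 4 + 1 = 13`. -/
theorem statement14 :
    (∀ v : Fin 3 → ℂ, (hv : v ≠ 0) →
      ((∀ a b : ℝ, 0 < b →
          (v 1) ^ 2 * (v 0 - (a : ℂ) * v 2) ^ 2
            - (b : ℂ) * v 1 * (v 0) ^ 2 * v 2 + (v 0) ^ 4 = 0) ↔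
        (Projectivization.mk ℂ v hv = Projectivization.mk ℂ (![0, 0, 1] : Fin 3 → ℂ)
            (by intro h; have := congrFun h 2; simp at this) ∨
         Projectivization.mk ℂ v hv = Projectivization.mk ℂ (![0, 1, 0] : Fin 3 → ℂ)
            (by intro h; have := congrFun h 1; simp at this) ∨
         Projectivization.mk ℂ v hv = Projectivization.mk ℂ (![Complex.I, 1, 0] : Fin 3 → ℂ)
            (by intro h; have := congrFun h 1; simp at this) ∨
         Projectivization.mk ℂ v hv = Projectivization.mk ℂ (![-Complex.I, 1, 0] : Fin 3 → ℂ)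
            (by intro h; have := congrFun h 1; simp at this)))) ∧
    tacnodeQuarticBaseLocus.ncard = 4 ∧
    4 ^ 2 - tacnodeQuarticBaseLocus.ncard + 1 = 13 := by
  rw [tacnodeQuarticBaseLocus_eq, ncard_basePts]
  exact ⟨tacnodeQuartic_forall_eq_zero_iff_mk_eq, rfl, rfl⟩

end
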